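/- arXiv:1202.6537 — 2 statements merged into one kernel-verified Lean document; each statement's English description precedes it below -/
import Mathlib

section
/- For all integers m, n with m > n ≥ 2, there is a bijection between (i) the set of plane trees with m vertices, of which exactly n are leaves, such that every nonleaf vertex has at least two children, and (ii) the set of partitions with exactly m − n faces of a convex polygon with n + 1 vertices. -/
namespace ImplicitDD

/-- The face of a dissection of the convex polygon with vertices `0, 1, …, N` whose top edge is
`(a, b)`: it consists of `a`, `b`, and all vertices `a < v < b` that are not strictly below
another edge of the dissection nested below `(a, b)`. -/
def faceOf (D : Finset (ℕ × ℕ)) (a b : ℕ) : Finset ℕ :=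
  (Finset.Icc a b).filter fun v =>
    v = a ∨ v = b ∨ ∀ e ∈ D, a ≤ e.1 → e.2 ≤ b → e ≠ (a, b) → ¬(e.1 < v ∧ v < e.2)

/-- A partition of the convex polygon with ordered vertices `0, 1, …, N`: a set of pairwise
noncrossing straight line segments (diagonals) between nonadjacent vertices. -/
structure PolyPartition (N : ℕ) where
  /-- The set of diagonals `(a, b)` with `a < b`, connecting nonadjacent vertices. -/
  diags : Finset (ℕ × ℕ)
  valid : ∀ e ∈ diags, e.1 + 2 ≤ e.2 ∧ e.2 ≤ N ∧ ¬(e.1 = 0 ∧ e.2 = N)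
  noncross : ∀ e ∈ diags, ∀ e' ∈ diags, ¬(e.1 < e'.1 ∧ e'.1 < e.2 ∧ e.2 < e'.2)

/-- The set `F(π)` of (bounded, oriented) faces of a polygon partition, each face recorded as
the set of its vertices; every face has a unique top edge, which is either a diagonal or the
outer edge `(0, N)`. -/
def PolyPartition.faces {N : ℕ} (π : PolyPartition N) : Finset (Finset ℕ) :=
  (insert (0, N) π.diags).image fun e => faceOf π.diags e.1 e.2

end ImplicitDD

namespace ImplicitDD

/-- A plane tree: a root together with a linearly ordered (possibly empty) list of subtrees. -/
inductive PTree : Type where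
  | node : List PTree → PTree

/-- The number of vertices of a plane tree. -/
def PTree.vertexCount : PTree → ℕ
  | .node ts => 1 + (ts.attach.map fun t => PTree.vertexCount t.1).sum
decreasing_by
  have := List.sizeOf_lt_of_mem t.2
  simp only [PTree.node.sizeOf_spec]
  omega

/-- The number of leaves of a plane tree (a single vertex counts as one leaf). -/
def PTree.leafCount : PTree → ℕ
  | .node [] => 1
  | .node ts => (ts.attach.map fun t => PTree.leafCount t.1).sum
decreasing_by
  have := List.sizeOf_lt_of_mem t.2
  simp only [PTree.node.sizeOf_spec]
  omega

/-- Every nonleaf vertex of the plane tree has at least two descendants. -/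
def PTree.Branching : PTree → Prop
  | .node ts => ts.length ≠ 1 ∧ ∀ t ∈ ts, PTree.Branching t
decreasing_by
  have := List.sizeOf_lt_of_mem ‹_ ∈ ts›
  simp only [PTree.node.sizeOf_spec]
  omega

/-- The number of vertices of a plane tree having exactly `i` descendants. -/
def PTree.degCount (i : ℕ) : PTree → ℕ
  | .node ts => (if ts.length = i then 1 else 0) + (ts.attach.map fun t => PTree.degCount i t.1).sum
decreasing_by
  have := List.sizeOf_lt_of_mem t.2
  simp only [PTree.node.sizeOf_spec]
  omega

end ImplicitDD

/-!
Number the leaves of a plane tree `0, …, n - 1` from left to right. The leaves below a vertex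
form an interval `i, …, j - 1`, and the vertex is sent to the chord `(i, j)` of the polygon with
vertices `0, …, n`, leaf `i` corresponding to the side `(i, i + 1)`. When every nonleaf vertex has
at least two children, the chords of the nonleaf vertices are distinct and pairwise noncrossing,
the root giving the side `(0, n)`; the others are the diagonals of a partition whose faces
correspond to the `m - n` nonleaf vertices. Conversely, a noncrossing family of chords inside
`[a, b]` determines its forest: the first tree spans `[a, c]`, where `c` is the far end of the
longest chord at `a` (or `a + 1` if there is none), and the remaining trees are recovered on
`[c, b]`.
-/

namespace ImplicitDD

theorem left_mem_faceOf (D : Finset (ℕ × ℕ)) {a b : ℕ} (h : a ≤ b) : a ∈ faceOf D a b := by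
  simp [faceOf, h]

theorem right_mem_faceOf (D : Finset (ℕ × ℕ)) {a b : ℕ} (h : a ≤ b) : b ∈ faceOf D a b := by
  simp [faceOf, h]

theorem faceOf_subset_Icc (D : Finset (ℕ × ℕ)) (a b : ℕ) : faceOf D a b ⊆ Finset.Icc a b :=
  Finset.filter_subset _ _

theorem faceOf_injOn (D : Finset (ℕ × ℕ)) :
    Set.InjOn (fun e : ℕ × ℕ => faceOf D e.1 e.2) {e | e.1 ≤ e.2} := by
  intro e he e' he' heq
  replace heq : faceOf D e.1 e.2 = faceOf D e'.1 e'.2 := heq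
  have mem_left {u : ℕ} (hu : u ∈ faceOf D e'.1 e'.2) : e.1 ≤ u ∧ u ≤ e.2 :=
    Finset.mem_Icc.1 (faceOf_subset_Icc D _ _ (heq ▸ hu))
  have mem_right {u : ℕ} (hu : u ∈ faceOf D e.1 e.2) : e'.1 ≤ u ∧ u ≤ e'.2 :=
    Finset.mem_Icc.1 (faceOf_subset_Icc D _ _ (heq.symm ▸ hu))
  have := mem_left (left_mem_faceOf D he')
  have := mem_left (right_mem_faceOf D he')
  have := mem_right (left_mem_faceOf D he)
  have := mem_right (right_mem_faceOf D he)
  ext <;> omega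

theorem PolyPartition.ext {N : ℕ} {π π' : PolyPartition N} (h : π.diags = π'.diags) :
    π = π' := by
  cases π; cases π'; congr

theorem PolyPartition.card_faces {N : ℕ} (π : PolyPartition N) :
    π.faces.card = π.diags.card + 1 := by
  have hnotMem : (0, N) ∉ π.diags := fun h => (π.valid _ h).2.2 ⟨rfl, rfl⟩
  rw [PolyPartition.faces, Finset.card_image_of_injOn, Finset.card_insert_of_notMem hnotMem]
  refine (faceOf_injOn π.diags).mono fun e he => ?_
  rcases Finset.mem_insert.1 he with rfl | he
  · exact Nat.zero_le N
  · exact (Nat.le_add_right _ _).trans (π.valid e he).1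

structure IsNoncrossingOn (a b : ℕ) (S : Finset (ℕ × ℕ)) : Prop where
  bounds : ∀ e ∈ S, a ≤ e.1 ∧ e.1 + 2 ≤ e.2 ∧ e.2 ≤ b
  noncross : ∀ e ∈ S, ∀ e' ∈ S, ¬(e.1 < e'.1 ∧ e'.1 < e.2 ∧ e.2 < e'.2)

namespace IsNoncrossingOn

variable {a b c : ℕ} {S T : Finset (ℕ × ℕ)}

theorem empty : IsNoncrossingOn a b ∅ := ⟨by simp, by simp⟩

theorem eq_empty_of_lt (h : IsNoncrossingOn a b S) (hba : b < a + 2) : S = ∅ :=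
  Finset.eq_empty_of_forall_notMem fun e he => by have := h.bounds e he; omega

theorem of_subset {a' b' : ℕ} (h : IsNoncrossingOn a b S) (hTS : T ⊆ S)
    (hT : ∀ e ∈ T, a' ≤ e.1 ∧ e.2 ≤ b') : IsNoncrossingOn a' b' T where
  bounds e he := ⟨(hT e he).1, (h.bounds e (hTS he)).2.1, (hT e he).2⟩
  noncross e he e' he' := h.noncross e (hTS he) e' (hTS he')

theorem mono (h : IsNoncrossingOn a b S) (hTS : T ⊆ S) : IsNoncrossingOn a b T :=
  h.of_subset hTS fun e he => ⟨(h.bounds e (hTS he)).1, (h.bounds e (hTS he)).2.2⟩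

theorem filter_snd_le (h : IsNoncrossingOn a b S) (c : ℕ) :
    IsNoncrossingOn a c (S.filter (·.2 ≤ c)) :=
  h.of_subset (Finset.filter_subset _ _) fun e he =>
    ⟨(h.bounds e (Finset.mem_filter.1 he).1).1, (Finset.mem_filter.1 he).2⟩

theorem filter_le_fst (h : IsNoncrossingOn a b S) (c : ℕ) :
    IsNoncrossingOn c b (S.filter (c ≤ ·.1)) :=
  h.of_subset (Finset.filter_subset _ _) fun e he =>
    ⟨(Finset.mem_filter.1 he).2, (h.bounds e (Finset.mem_filter.1 he).1).2.2⟩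

theorem union (hS : IsNoncrossingOn a b S) (hT : IsNoncrossingOn b c T) (hab : a ≤ b)
    (hbc : b ≤ c) : IsNoncrossingOn a c (S ∪ T) where
  bounds e he := by
    rcases Finset.mem_union.1 he with he | he
    · have := hS.bounds e he; omega
    · have := hT.bounds e he; omega
  noncross e he e' he' := by
    rcases Finset.mem_union.1 he with he | he <;> rcases Finset.mem_union.1 he' with he' | he'
    · exact hS.noncross e he e' he'
    · have := hS.bounds e he; have := hT.bounds e' he'; omega
    · have := hT.bounds e he; have := hS.bounds e' he'; omega
    · exact hT.noncross e he e' he'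

theorem insert (h : IsNoncrossingOn a b S) (hab : a + 2 ≤ b) :
    IsNoncrossingOn a b (insert (a, b) S) where
  bounds e he := by
    rcases Finset.mem_insert.1 he with rfl | he
    · exact ⟨le_rfl, hab, le_rfl⟩
    · exact h.bounds e he
  noncross e he e' he' := by
    rcases Finset.mem_insert.1 he with rfl | he <;> rcases Finset.mem_insert.1 he' with rfl | he'
    · simp
    · have := h.bounds e' he'; omega
    · have := h.bounds e he; omega
    · exact h.noncross e he e' he'

theorem disjoint (hS : IsNoncrossingOn a b S) (hT : IsNoncrossingOn b c T) : Disjoint S T :=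
  Finset.disjoint_left.2 fun e hS' hT' => by
    have := hS.bounds e hS'; have := hT.bounds e hT'; omega

theorem notMem_union (hS : IsNoncrossingOn a b S) (hT : IsNoncrossingOn b c T) (hab : a < b)
    (hbc : b < c) : (a, c) ∉ S ∪ T := by
  intro h
  rcases Finset.mem_union.1 h with h | h
  · have := hS.bounds _ h; simp at this; omega
  · have := hT.bounds _ h; simp at this; omega

theorem filter_union_left (hS : IsNoncrossingOn a b S) (hT : IsNoncrossingOn b c T) :
    (S ∪ T).filter (·.2 ≤ b) = S := by
  ext e
  simp only [Finset.mem_filter, Finset.mem_union]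
  constructor
  · rintro ⟨he | he, hb⟩
    · exact he
    · have := hT.bounds e he; omega
  · exact fun he => ⟨Or.inl he, (hS.bounds e he).2.2⟩

theorem filter_union_right (hS : IsNoncrossingOn a b S) (hT : IsNoncrossingOn b c T) :
    (S ∪ T).filter (b ≤ ·.1) = T := by
  ext e
  simp only [Finset.mem_filter, Finset.mem_union]
  constructor
  · rintro ⟨he | he, hb⟩
    · have := hS.bounds e he; omega
    · exact he
  · exact fun he => ⟨Or.inr he, (hT.bounds e he).1⟩

end IsNoncrossingOn

def firstCut (S : Finset (ℕ × ℕ)) (a : ℕ) : ℕ :=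
  (S.filter (·.1 = a)).sup Prod.snd ⊔ (a + 1)

section firstCut

variable {a b y : ℕ} {S : Finset (ℕ × ℕ)}

theorem lt_firstCut : a < firstCut S a :=
  Nat.lt_of_succ_le le_sup_right

theorem le_firstCut (h : (a, y) ∈ S) : y ≤ firstCut S a :=
  le_sup_of_le_left (Finset.le_sup (f := Prod.snd)
    (show (a, y) ∈ S.filter (·.1 = a) from Finset.mem_filter.2 ⟨h, rfl⟩))

theorem firstCut_eq_or_mem : firstCut S a = a + 1 ∨ (a, firstCut S a) ∈ S := by
  set F := S.filter (·.1 = a) with hF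
  rcases le_total (F.sup Prod.snd) (a + 1) with h | h
  · exact Or.inl (sup_eq_right.2 h)
  · have hne : F.Nonempty := Finset.nonempty_iff_ne_empty.2 fun h0 => by
      rw [h0, Finset.sup_empty] at h
      exact absurd h (by simp)
    obtain ⟨e, he, hsup⟩ := Finset.exists_mem_eq_sup F hne Prod.snd
    obtain ⟨heS, hea⟩ := Finset.mem_filter.1 he
    have hcut : firstCut S a = e.2 := by rw [firstCut, ← hF, sup_eq_left.2 h, hsup]
    right
    rwa [hcut, ← hea]

theorem IsNoncrossingOn.firstCut_le (h : IsNoncrossingOn a b S) (hab : a < b) :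
    firstCut S a ≤ b :=
  sup_le (Finset.sup_le fun e he => (h.bounds e (Finset.mem_filter.1 he).1).2.2) hab

theorem IsNoncrossingOn.filter_union_filter_firstCut (h : IsNoncrossingOn a b S) :
    S.filter (·.2 ≤ firstCut S a) ∪ S.filter (firstCut S a ≤ ·.1) = S := by
  refine subset_antisymm (Finset.union_subset (Finset.filter_subset _ _)
    (Finset.filter_subset _ _)) fun e he => ?_
  simp only [Finset.mem_union, Finset.mem_filter, he, true_and]
  by_contra! hcut
  have ha := (h.bounds e he).1
  rcases eq_or_lt_of_le ha with hea | hea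
  · have := le_firstCut (S := S) (show (a, e.2) ∈ S from hea ▸ he)
    omega
  · rcases firstCut_eq_or_mem (S := S) (a := a) with hx | hx
    · omega
    · exact h.noncross _ hx e he ⟨hea, hcut.2, hcut.1⟩

end firstCut

namespace PTree

def forestLeafCount (ts : List PTree) : ℕ := (ts.map leafCount).sum

@[simp] theorem forestLeafCount_nil : forestLeafCount [] = 0 := rfl

@[simp] theorem forestLeafCount_cons (t : PTree) (ts : List PTree) :
    forestLeafCount (t :: ts) = t.leafCount + forestLeafCount ts := by
  simp [forestLeafCount]

@[simp] theorem leafCount_node_nil : (node []).leafCount = 1 := by rw [leafCount]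

theorem leafCount_node {ts : List PTree} (hts : ts ≠ []) :
    (node ts).leafCount = forestLeafCount ts := by
  cases ts with
  | nil => contradiction
  | cons t ts =>
    rw [leafCount, List.map_attach_eq_pmap]
    · simp [List.pmap_eq_map, forestLeafCount]
    · exact hts

theorem vertexCount_node (ts : List PTree) :
    (node ts).vertexCount = 1 + (ts.map vertexCount).sum := by
  rw [vertexCount, List.map_attach_eq_pmap]
  simp [List.pmap_eq_map]

theorem branching_node (ts : List PTree) :
    (node ts).Branching ↔ ts.length ≠ 1 ∧ ∀ t ∈ ts, t.Branching := by
  rw [Branching]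

theorem leafCount_pos : ∀ τ : PTree, 0 < τ.leafCount
  | node [] => by simp
  | node (t :: ts) => by
    rw [leafCount_node (List.cons_ne_nil t ts), forestLeafCount_cons]
    exact Nat.add_pos_left (leafCount_pos t) _

theorem two_le_leafCount {ts : List PTree} (h : (node ts).Branching) (hts : ts ≠ []) :
    2 ≤ (node ts).leafCount := by
  obtain ⟨hlen, -⟩ := (branching_node ts).1 h
  obtain _ | ⟨t, _ | ⟨t', ts⟩⟩ := ts
  · contradiction
  · exact absurd rfl hlen
  · rw [leafCount_node hts, forestLeafCount_cons, forestLeafCount_cons]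
    have := leafCount_pos t
    have := leafCount_pos t'
    omega

theorem leafCount_node_eq_one_iff {ts : List PTree} (h : (node ts).Branching) :
    (node ts).leafCount = 1 ↔ ts = [] := by
  refine ⟨fun h1 => ?_, by rintro rfl; simp⟩
  by_contra hts
  have := two_le_leafCount h hts
  omega

@[elab_as_elim]
theorem forest_induction {Q : List PTree → Prop} (nil : Q [])
    (cons : ∀ us ts, Q us → Q ts → Q (node us :: ts)) (ts : List PTree) : Q ts :=
  PTree.rec_1 (motive_1 := fun τ => ∀ ts, Q ts → Q (τ :: ts))
    (fun us hus ts hts => cons us ts hus hts) nil (fun _ ts ht hts => ht ts hts) ts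

/-- `forestSpans a ts` has one pair `(i, j)` for each nonleaf vertex of the forest `ts`, the
leaves below it being those numbered `i, …, j - 1` when the leaves of `ts` are numbered from `a`
on. -/
def forestSpans (a : ℕ) : List PTree → Finset (ℕ × ℕ)
  | [] => ∅
  | node [] :: ts => forestSpans (a + 1) ts
  | node (u :: us) :: ts =>
    insert (a, a + forestLeafCount (u :: us)) (forestSpans a (u :: us)) ∪
      forestSpans (a + forestLeafCount (u :: us)) ts

def spans (a : ℕ) (τ : PTree) : Finset (ℕ × ℕ) := forestSpans a [τ]

@[simp] theorem forestSpans_nil (a : ℕ) : forestSpans a [] = ∅ := by rw [forestSpans]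

@[simp] theorem spans_node_nil (a : ℕ) : spans a (node []) = ∅ := by
  rw [spans, forestSpans, forestSpans_nil]

theorem spans_node {ts : List PTree} (a : ℕ) (hts : ts ≠ []) :
    spans a (node ts) = insert (a, a + forestLeafCount ts) (forestSpans a ts) := by
  obtain _ | ⟨t, ts⟩ := ts
  · contradiction
  · rw [spans, forestSpans, forestSpans_nil, Finset.union_empty]

theorem forestSpans_cons (a : ℕ) (t : PTree) (ts : List PTree) :
    forestSpans a (t :: ts) = spans a t ∪ forestSpans (a + t.leafCount) ts := by
  obtain ⟨_ | ⟨u, us⟩⟩ := t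
  · rw [forestSpans, spans_node_nil, Finset.empty_union, leafCount_node_nil]
  · rw [forestSpans, spans_node a (List.cons_ne_nil u us), leafCount_node (List.cons_ne_nil u us)]

theorem forestSpans_singleton (a : ℕ) (τ : PTree) : forestSpans a [τ] = spans a τ := rfl

theorem mem_spans_self (a : ℕ) {τ : PTree} (h : 2 ≤ τ.leafCount) :
    (a, a + τ.leafCount) ∈ spans a τ := by
  obtain ⟨_ | ⟨t, ts⟩⟩ := τ
  · simp at h
  · rw [spans_node a (List.cons_ne_nil t ts), leafCount_node (List.cons_ne_nil t ts)]
    exact Finset.mem_insert_self _ _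

theorem isNoncrossingOn_forestSpans (a : ℕ) {ts : List PTree} (h : ∀ t ∈ ts, t.Branching) :
    IsNoncrossingOn a (a + forestLeafCount ts) (forestSpans a ts) := by
  induction ts using forest_induction generalizing a with
  | nil => simpa using IsNoncrossingOn.empty
  | cons us ts ihus ihts =>
    obtain ⟨hlen, hus⟩ := (branching_node us).1 (h _ List.mem_cons_self)
    have hhead : IsNoncrossingOn a (a + (node us).leafCount) (spans a (node us)) := by
      obtain _ | ⟨u, us⟩ := us
      · simpa using IsNoncrossingOn.empty
      · have h2 := two_le_leafCount (h _ List.mem_cons_self) (List.cons_ne_nil u us)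
        rw [spans_node a (List.cons_ne_nil u us)]
        rw [leafCount_node (List.cons_ne_nil u us)] at h2 ⊢
        exact (ihus a hus).insert (by omega)
    rw [forestSpans_cons, forestLeafCount_cons, ← add_assoc]
    exact hhead.union (ihts _ fun t ht => h t (List.mem_cons_of_mem _ ht)) (by omega) (by omega)

theorem isNoncrossingOn_spans (a : ℕ) {τ : PTree} (h : τ.Branching) :
    IsNoncrossingOn a (a + τ.leafCount) (spans a τ) := by
  simpa [forestSpans_singleton] using isNoncrossingOn_forestSpans a (ts := [τ]) (by simpa)

theorem notMem_forestSpans (a : ℕ) {ts : List PTree} (h : ∀ t ∈ ts, t.Branching)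
    (hlen : ts.length ≠ 1) : (a, a + forestLeafCount ts) ∉ forestSpans a ts := by
  obtain _ | ⟨t, _ | ⟨t', ts⟩⟩ := ts
  · simp
  · exact absurd rfl hlen
  · have hbr : ∀ s ∈ t' :: ts, s.Branching := fun s hs => h s (List.mem_cons_of_mem t hs)
    have := leafCount_pos t
    have := leafCount_pos t'
    rw [forestSpans_cons, forestLeafCount_cons, ← add_assoc]
    refine (isNoncrossingOn_spans a (h t List.mem_cons_self)).notMem_union
      (isNoncrossingOn_forestSpans _ hbr) (by omega) ?_
    simp only [forestLeafCount_cons]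
    omega

theorem branching_node_iff (a : ℕ) {ts : List PTree} (h : ∀ t ∈ ts, t.Branching)
    (h2 : 2 ≤ forestLeafCount ts) :
    (node ts).Branching ↔ (a, a + forestLeafCount ts) ∉ forestSpans a ts := by
  refine ⟨fun hts => notMem_forestSpans a h ((branching_node ts).1 hts).1, fun hnotMem => ?_⟩
  refine (branching_node ts).2 ⟨fun hlen => hnotMem ?_, h⟩
  obtain ⟨t, rfl⟩ := List.length_eq_one_iff.1 hlen
  simp only [forestLeafCount_cons, forestLeafCount_nil, add_zero] at h2 ⊢
  simpa [forestSpans_singleton] using mem_spans_self a h2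

theorem card_forestSpans_add_forestLeafCount (a : ℕ) {ts : List PTree}
    (h : ∀ t ∈ ts, t.Branching) :
    (forestSpans a ts).card + forestLeafCount ts = (ts.map vertexCount).sum := by
  induction ts using forest_induction generalizing a with
  | nil => simp
  | cons us ts ihus ihts =>
    have hbr := h _ List.mem_cons_self
    have hts : ∀ t ∈ ts, t.Branching := fun t ht => h t (List.mem_cons_of_mem _ ht)
    have hhead : (spans a (node us)).card + (node us).leafCount = (node us).vertexCount := by
      obtain ⟨hlen, hus⟩ := (branching_node us).1 hbr
      obtain _ | ⟨u, us⟩ := us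
      · simp [vertexCount_node]
      · rw [spans_node a (List.cons_ne_nil u us), leafCount_node (List.cons_ne_nil u us),
          Finset.card_insert_of_notMem (notMem_forestSpans a hus hlen), vertexCount_node,
          ← ihus a hus]
        omega
    rw [forestSpans_cons, Finset.card_union_of_disjoint
      ((isNoncrossingOn_spans a hbr).disjoint (isNoncrossingOn_forestSpans _ hts)),
      forestLeafCount_cons, List.map_cons, List.sum_cons, ← hhead,
      ← ihts (a + (node us).leafCount) hts]
    omega

theorem card_spans_add_leafCount (a : ℕ) {τ : PTree} (h : τ.Branching) :
    (spans a τ).card + τ.leafCount = τ.vertexCount := by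
  simpa [forestSpans_singleton] using card_forestSpans_add_forestLeafCount a (ts := [τ]) (by simpa)

theorem firstCut_forestSpans_cons (a : ℕ) {t : PTree} {ts : List PTree}
    (h : ∀ s ∈ t :: ts, s.Branching) :
    firstCut (forestSpans a (t :: ts)) a = a + t.leafCount := by
  have hS := isNoncrossingOn_spans a (h t List.mem_cons_self)
  have hT := isNoncrossingOn_forestSpans (a + t.leafCount)
    fun s hs => h s (List.mem_cons_of_mem t hs)
  have hpos := leafCount_pos t
  refine le_antisymm (sup_le (Finset.sup_le fun e he => ?_) (by omega)) ?_
  · obtain ⟨he, rfl⟩ := Finset.mem_filter.1 he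
    rcases Finset.mem_union.1 ((forestSpans_cons _ _ _) ▸ he) with he | he
    · exact (hS.bounds e he).2.2
    · have := (hT.bounds e he).1; omega
  · rcases Nat.lt_or_ge t.leafCount 2 with h1 | h2
    · have := lt_firstCut (S := forestSpans a (t :: ts)) (a := a); omega
    · refine le_firstCut ?_
      rw [forestSpans_cons]
      exact Finset.mem_union_left _ (mem_spans_self a h2)

theorem spans_eq_of_forestSpans_cons_eq (a : ℕ) {t t' : PTree} {ts ts' : List PTree}
    (h : ∀ s ∈ t :: ts, s.Branching) (h' : ∀ s ∈ t' :: ts', s.Branching)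
    (hforest : forestSpans a (t :: ts) = forestSpans a (t' :: ts')) :
    t.leafCount = t'.leafCount ∧ spans a t = spans a t' ∧
      forestSpans (a + t.leafCount) ts = forestSpans (a + t.leafCount) ts' := by
  -- `firstCut` locates the end of the first tree; the two parts are then separated by position.
  have hcut : t.leafCount = t'.leafCount := by
    have := firstCut_forestSpans_cons a h
    rw [hforest, firstCut_forestSpans_cons a h'] at this
    omega
  have hS := isNoncrossingOn_spans a (h t List.mem_cons_self)
  have hS' := isNoncrossingOn_spans a (h' t' List.mem_cons_self)
  have hT := isNoncrossingOn_forestSpans (a + t.leafCount)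
    fun s hs => h s (List.mem_cons_of_mem _ hs)
  have hT' := isNoncrossingOn_forestSpans (a + t'.leafCount)
    fun s hs => h' s (List.mem_cons_of_mem _ hs)
  rw [← hcut] at hS' hT'
  rw [forestSpans_cons, forestSpans_cons, ← hcut] at hforest
  refine ⟨hcut, ?_, ?_⟩
  · rw [← hS.filter_union_left hT, hforest, hS'.filter_union_left hT']
  · rw [← hS.filter_union_right hT, hforest, hS'.filter_union_right hT']

theorem forestSpans_eq_of_spans_node_eq (a : ℕ) {us us' : List PTree} (h : (node us).Branching)
    (h' : (node us').Branching) (hlc : (node us).leafCount = (node us').leafCount)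
    (hspans : spans a (node us) = spans a (node us')) :
    forestLeafCount us = forestLeafCount us' ∧ forestSpans a us = forestSpans a us' := by
  have hnil : us = [] ↔ us' = [] := by
    rw [← leafCount_node_eq_one_iff h, ← leafCount_node_eq_one_iff h', hlc]
  obtain rfl | hne := eq_or_ne us []
  · simp [hnil.1 rfl]
  have hne' : us' ≠ [] := fun h => hne (hnil.2 h)
  obtain ⟨hlen, hus⟩ := (branching_node us).1 h
  obtain ⟨hlen', hus'⟩ := (branching_node us').1 h'
  rw [leafCount_node hne, leafCount_node hne'] at hlc
  rw [spans_node a hne, spans_node a hne'] at hspans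
  refine ⟨hlc, ?_⟩
  rw [← Finset.erase_insert (notMem_forestSpans a hus hlen), hspans, hlc,
    Finset.erase_insert (notMem_forestSpans a hus' hlen')]

theorem eq_of_forestSpans_eq (a : ℕ) {ts ts' : List PTree} (h : ∀ t ∈ ts, t.Branching)
    (h' : ∀ t ∈ ts', t.Branching) (hlc : forestLeafCount ts = forestLeafCount ts')
    (hforest : forestSpans a ts = forestSpans a ts') : ts = ts' := by
  induction ts using forest_induction generalizing a ts' with
  | nil =>
    obtain _ | ⟨t', ts'⟩ := ts'
    · rfl
    · have := leafCount_pos t'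
      simp only [forestLeafCount_nil, forestLeafCount_cons] at hlc
      omega
  | cons us ts ihus ihts =>
    obtain _ | ⟨⟨us'⟩, ts'⟩ := ts'
    · have := leafCount_pos (node us)
      simp only [forestLeafCount_nil, forestLeafCount_cons] at hlc
      omega
    obtain ⟨hcut, hhead, htail⟩ := spans_eq_of_forestSpans_cons_eq a h h' hforest
    have hbr := h _ List.mem_cons_self
    have hbr' := h' _ List.mem_cons_self
    obtain ⟨hflc, hchildren⟩ := forestSpans_eq_of_spans_node_eq a hbr hbr' hcut hhead
    simp only [forestLeafCount_cons, hcut, Nat.add_left_cancel_iff] at hlc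
    rw [ihus a ((branching_node us).1 hbr).2 ((branching_node us').1 hbr').2 hflc hchildren,
      ihts _ (fun s hs => h s (List.mem_cons_of_mem _ hs))
        (fun s hs => h' s (List.mem_cons_of_mem _ hs)) hlc htail]

theorem eq_of_spans_eq (a : ℕ) {τ τ' : PTree} (h : τ.Branching) (h' : τ'.Branching)
    (hlc : τ.leafCount = τ'.leafCount) (hspans : spans a τ = spans a τ') : τ = τ' :=
  List.singleton_injective (eq_of_forestSpans_eq a (by simpa) (by simpa) (by simpa) hspans)

theorem exists_forestSpans_eq {a b : ℕ} {S : Finset (ℕ × ℕ)} (h : IsNoncrossingOn a b S) :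
    ∃ ts : List PTree, (∀ t ∈ ts, t.Branching) ∧ forestLeafCount ts = b - a ∧
      forestSpans a ts = S := by
  rcases le_or_gt b a with hba | hab
  · exact ⟨[], by simp, by simp; omega, by simp [h.eq_empty_of_lt (by omega)]⟩
  set x := firstCut S a with hx
  have hax : a < x := lt_firstCut
  have hxb : x ≤ b := h.firstCut_le hab
  have hleft := h.filter_snd_le x
  obtain ⟨ts, hts, hflc, hspans⟩ := exists_forestSpans_eq (h.filter_le_fst x)
  obtain ⟨t, ht, hlc, hspan⟩ : ∃ t : PTree, t.Branching ∧ t.leafCount = x - a ∧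
      spans a t = S.filter (·.2 ≤ x) := by
    rcases firstCut_eq_or_mem (S := S) (a := a) with hx1 | hmem
    · refine ⟨node [], (branching_node []).2 (by simp), by simp; omega, ?_⟩
      rw [spans_node_nil, hleft.eq_empty_of_lt (by omega)]
    have hmem' : (a, x) ∈ S.filter (·.2 ≤ x) := Finset.mem_filter.2 ⟨hmem, le_rfl⟩
    have hx2 : a + 2 ≤ x := (h.bounds _ hmem).2.1
    obtain ⟨us, hus, hflc', hspans'⟩ :=
      exists_forestSpans_eq (hleft.mono (Finset.erase_subset (a, x) _))
    have hne : us ≠ [] := by rintro rfl; simp at hflc'; omega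
    refine ⟨node us, (branching_node_iff a hus (by omega)).2 ?_, by rw [leafCount_node hne, hflc'],
      ?_⟩
    · rw [hflc', hspans', Nat.add_sub_cancel' hax.le]
      exact Finset.notMem_erase _ _
    · rw [spans_node a hne, hflc', hspans', Nat.add_sub_cancel' hax.le, Finset.insert_erase hmem']
  refine ⟨t :: ts, List.forall_mem_cons.2 ⟨ht, hts⟩, by simp only [forestLeafCount_cons]; omega, ?_⟩
  rw [forestSpans_cons, hspan, hlc, Nat.add_sub_cancel' hax.le, hspans,
    h.filter_union_filter_firstCut]
-- The first tree's family loses the chord `(a, x)`; the remaining trees live on a shorter interval.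
termination_by S.card + (b - a)
decreasing_by
  all_goals rw [← hx]
  · have := Finset.card_filter_le S (x ≤ ·.1)
    omega
  · have := Finset.card_erase_lt_of_mem hmem'
    have := Finset.card_filter_le S (·.2 ≤ x)
    omega

@[simps]
def toPolyPartition (τ : PTree) (hτ : τ.Branching) {n : ℕ} (hn : τ.leafCount = n) :
    PolyPartition n where
  diags := (spans 0 τ).erase (0, n)
  valid e he := by
    have := (isNoncrossingOn_spans 0 hτ).bounds e (Finset.mem_of_mem_erase he)
    exact ⟨this.2.1, by omega, fun h0 => Finset.ne_of_mem_erase he (Prod.ext h0.1 h0.2)⟩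
  noncross e he e' he' := (isNoncrossingOn_spans 0 hτ).noncross e (Finset.mem_of_mem_erase he)
    e' (Finset.mem_of_mem_erase he')

theorem root_mem_spans {τ : PTree} {n : ℕ} (hn : τ.leafCount = n) (hn2 : 2 ≤ n) :
    (0, n) ∈ spans 0 τ := by
  simpa [hn] using mem_spans_self 0 (τ := τ) (by omega)

theorem card_faces_toPolyPartition {τ : PTree} (hτ : τ.Branching) {n : ℕ}
    (hn : τ.leafCount = n) (hn2 : 2 ≤ n) :
    (τ.toPolyPartition hτ hn).faces.card + n = τ.vertexCount := by
  rw [PolyPartition.card_faces, toPolyPartition_diags,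
    Finset.card_erase_add_one (root_mem_spans hn hn2), ← hn, card_spans_add_leafCount 0 hτ]

theorem eq_of_toPolyPartition_eq {τ τ' : PTree} {hτ : τ.Branching} {hτ' : τ'.Branching} {n : ℕ}
    {hn : τ.leafCount = n} {hn' : τ'.leafCount = n} (hn2 : 2 ≤ n)
    (h : τ.toPolyPartition hτ hn = τ'.toPolyPartition hτ' hn') : τ = τ' := by
  have hdiags := congrArg PolyPartition.diags h
  rw [toPolyPartition_diags, toPolyPartition_diags] at hdiags
  refine eq_of_spans_eq 0 hτ hτ' (hn.trans hn'.symm) ?_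
  rw [← Finset.insert_erase (root_mem_spans hn hn2), hdiags,
    Finset.insert_erase (root_mem_spans hn' hn2)]

theorem exists_toPolyPartition_eq {n : ℕ} (hn2 : 2 ≤ n) (π : PolyPartition n) :
    ∃ (τ : PTree) (hτ : τ.Branching) (hn : τ.leafCount = n), τ.toPolyPartition hτ hn = π := by
  have hroot : (0, n) ∉ π.diags := fun h => (π.valid _ h).2.2 ⟨rfl, rfl⟩
  obtain ⟨ts, hts, hflc, hspans⟩ := exists_forestSpans_eq (a := 0)
    ⟨fun e he => ⟨Nat.zero_le _, (π.valid e he).1, (π.valid e he).2.1⟩, π.noncross⟩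
  rw [Nat.sub_zero] at hflc
  have hne : ts ≠ [] := by rintro rfl; simp at hflc; omega
  refine ⟨node ts, (branching_node_iff 0 hts (by omega)).2 ?_, by rw [leafCount_node hne, hflc],
    PolyPartition.ext ?_⟩
  · rwa [hflc, hspans, zero_add]
  · rw [toPolyPartition_diags, spans_node 0 hne, hflc, hspans, zero_add,
      Finset.erase_insert hroot]

end PTree

theorem plane_trees_equiv_polygon_partitions_general (m n : ℕ) (hn : 2 ≤ n) :
    Nonempty
      ({τ : PTree // τ.vertexCount = m ∧ τ.leafCount = n ∧ τ.Branching}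
        ≃ {π : PolyPartition n // π.faces.card = m - n}) := by
  open PTree in
  refine ⟨Equiv.ofBijective (fun τ => ⟨τ.1.toPolyPartition τ.2.2.2 τ.2.2.1, ?_⟩)
    ⟨fun τ τ' h => ?_, fun π => ?_⟩⟩
  · have := card_faces_toPolyPartition τ.2.2.2 τ.2.2.1 hn
    omega
  · rw [Subtype.mk.injEq] at h
    exact Subtype.ext (eq_of_toPolyPartition_eq hn h)
  · obtain ⟨τ, hτ, hlc, hπ⟩ := exists_toPolyPartition_eq hn π.1
    have hvc := card_faces_toPolyPartition hτ hlc hn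
    have hfaces := π.1.card_faces
    rw [hπ, π.2] at hvc
    rw [π.2] at hfaces
    exact ⟨⟨τ, by omega, hlc, hτ⟩, Subtype.ext hπ⟩

/-- For all integers `m > n ≥ 2` there is a bijection between plane trees with
`m` vertices of which `n` are leaves, all of whose nonleaf vertices have at least two
descendants, and partitions with `m − n` faces of a convex polygon with `n + 1` vertices. -/
theorem plane_trees_equiv_polygon_partitions (m n : ℕ) (hn : 2 ≤ n) (hm : n < m) :
    Nonempty
      ({τ : PTree // τ.vertexCount = m ∧ τ.leafCount = n ∧ τ.Branching}
        ≃ {π : PolyPartition n // π.faces.card = m - n}) :=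
  plane_trees_equiv_polygon_partitions_general m n hn

end ImplicitDD
end

section
/- Let q ≥ 1 and let n ∈ ℕ^q be nonzero. Then every multiset p of nonzero tuples in ℕ^q × ℕ satisfying (0,1) ∉ p and p ⊢ (n, |p| − 1) has at most 2|n| − 1 elements (counted with multiplicity); consequently, for each nonzero n there are only finitely many such multisets p. -/
/-!
Give a part `(a, b)` the weight `2|a| + b`. Every part other than `(0,0)` and `(0,1)` has weight
at least `2`, while the weights of `p ⊢ (n, |p| - 1)` add up to `2|n| + |p| - 1`; hence
`2|p| ≤ 2|n| + |p| - 1`. Bounding `|p|` also bounds every part by `(n, 2|n|)`, and there are only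
finitely many multisets of bounded size drawn from a finite set.
-/

namespace ImplicitDD

open Multiset

theorem _root_.Multiset.setOf_card_le_forall_mem_finite {α : Type*} (S : Finset α) (N : ℕ) :
    {p : Multiset α | card p ≤ N ∧ ∀ x ∈ p, x ∈ S}.Finite := by
  classical
  refine (N • S.val).powerset.toFinset.finite_toSet.subset ?_
  rintro p ⟨hcard, hS⟩
  simp only [Finset.mem_coe, mem_toFinset, mem_powerset, le_iff_count, count_nsmul]
  intro x
  by_cases hx : x ∈ p
  · calc count x p ≤ N := (count_le_card x p).trans hcard
      _ = N * count x S.val := by rw [count_eq_one_of_mem S.nodup (hS x hx), mul_one]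
  · simp [count_eq_zero_of_notMem hx]

variable {ι : Type*} [Fintype ι]

lemma two_le_two_mul_sum_add {e : (ι → ℕ) × ℕ} (h0 : e ≠ (0, 0)) (h1 : e ≠ (0, 1)) :
    2 ≤ 2 * ∑ j, e.1 j + e.2 := by
  by_cases he : e.1 = 0
  · have : e.2 ≠ 0 := fun h => h0 (Prod.ext he h)
    have : e.2 ≠ 1 := fun h => h1 (Prod.ext he h)
    omega
  · obtain ⟨j, hj⟩ := Function.ne_iff.1 he
    have : e.1 j ≤ ∑ j, e.1 j := Finset.single_le_sum (fun _ _ => Nat.zero_le _) (Finset.mem_univ j)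
    simp only [Pi.zero_apply] at hj
    omega

lemma two_mul_card_le (p : Multiset ((ι → ℕ) × ℕ)) (h0 : (0, 0) ∉ p) (h1 : (0, 1) ∉ p) :
    2 * card p ≤ 2 * ∑ j, (p.map Prod.fst).sum j + (p.map Prod.snd).sum :=
  calc 2 * card p = card (p.map fun e => 2 * ∑ j, e.1 j + e.2) • 2 := by
        rw [card_map, smul_eq_mul, mul_comm]
    _ ≤ (p.map fun e => 2 * ∑ j, e.1 j + e.2).sum := by
        refine card_nsmul_le_sum ?_
        intro w hw
        obtain ⟨e, he, rfl⟩ := mem_map.1 hw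
        exact two_le_two_mul_sum_add (ne_of_mem_of_not_mem he h0) (ne_of_mem_of_not_mem he h1)
    _ = 2 * ∑ j, (p.map Prod.fst).sum j + (p.map Prod.snd).sum := by
        simp only [sum_map_add, sum_map_mul_left, sum_map_sum, Pi.multiset_sum_apply, map_map,
          Function.comp_def]

lemma card_le_two_mul_sum_sub_one (p : Multiset ((ι → ℕ) × ℕ)) (h0 : (0, 0) ∉ p) (h1 : (0, 1) ∉ p)
    (hsnd : (p.map Prod.snd).sum + 1 = card p) :
    card p ≤ 2 * ∑ j, (p.map Prod.fst).sum j - 1 := by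
  have := two_mul_card_le p h0 h1
  omega

theorem partition_bound_and_finiteness_general (q : ℕ) (n : Fin q → ℕ) :
    (∀ p : Multiset ((Fin q → ℕ) × ℕ),
      (∀ e ∈ p, e ≠ ((fun _ => 0 : Fin q → ℕ), 0)) →
      ((fun _ => 0 : Fin q → ℕ), 1) ∉ p →
      (p.map Prod.fst).sum = n →
      (p.map Prod.snd).sum + 1 = Multiset.card p →
      Multiset.card p ≤ 2 * (∑ j, n j) - 1) ∧
    {p : Multiset ((Fin q → ℕ) × ℕ) |
      (∀ e ∈ p, e ≠ ((fun _ => 0 : Fin q → ℕ), 0)) ∧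
      ((fun _ => 0 : Fin q → ℕ), 1) ∉ p ∧
      (p.map Prod.fst).sum = n ∧
      (p.map Prod.snd).sum + 1 = Multiset.card p}.Finite := by
  have bound : ∀ p : Multiset ((Fin q → ℕ) × ℕ), (∀ e ∈ p, e ≠ (0, 0)) → ((0 : Fin q → ℕ), 1) ∉ p →
      (p.map Prod.fst).sum = n → (p.map Prod.snd).sum + 1 = card p →
      card p ≤ 2 * (∑ j, n j) - 1 := by
    rintro p h0 h1 rfl hsnd
    exact card_le_two_mul_sum_sub_one p (fun h => h0 _ h rfl) h1 hsnd
  refine ⟨bound, ?_⟩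
  refine (setOf_card_le_forall_mem_finite (Finset.Iic n ×ˢ Finset.Iic (2 * ∑ j, n j))
    (2 * ∑ j, n j)).subset ?_
  rintro p ⟨h0, h1, hfst, hsnd⟩
  have hcard := bound p h0 h1 hfst hsnd
  refine ⟨by omega, fun e he => Finset.mem_product.2 ⟨?_, ?_⟩⟩
  · exact Finset.mem_Iic.2 (hfst ▸ le_sum_of_mem (mem_map_of_mem _ he))
  · have : e.2 ≤ (p.map Prod.snd).sum := le_sum_of_mem (mem_map_of_mem _ he)
    exact Finset.mem_Iic.2 (by omega)

/-- For `q ≥ 1` and nonzero `n ∈ ℕ^q`, every multiset `p` of nonzero tuples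
in `ℕ^q × ℕ` with `(0,1) ∉ p` and `p ⊢ (n, |p| − 1)` has at most `2|n| − 1` elements (counted
with multiplicity); consequently there are only finitely many such multisets `p`. -/
theorem partition_bound_and_finiteness (q : ℕ) (hq : 1 ≤ q) (n : Fin q → ℕ)
    (hn : n ≠ fun _ => 0) :
    (∀ p : Multiset ((Fin q → ℕ) × ℕ),
      (∀ e ∈ p, e ≠ ((fun _ => 0 : Fin q → ℕ), 0)) →
      ((fun _ => 0 : Fin q → ℕ), 1) ∉ p →
      (p.map Prod.fst).sum = n →
      (p.map Prod.snd).sum + 1 = Multiset.card p →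
      Multiset.card p ≤ 2 * (∑ j, n j) - 1) ∧
    {p : Multiset ((Fin q → ℕ) × ℕ) |
      (∀ e ∈ p, e ≠ ((fun _ => 0 : Fin q → ℕ), 0)) ∧
      ((fun _ => 0 : Fin q → ℕ), 1) ∉ p ∧
      (p.map Prod.fst).sum = n ∧
      (p.map Prod.snd).sum + 1 = Multiset.card p}.Finite :=
  partition_bound_and_finiteness_general q n

end ImplicitDD
end
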